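/- For every x in [0,1] and every natural number i > 0, ∫_{2/3^i}^{(2+x)/3^i} f(t) dt = (2^(i-1) / 9^i) · x + (2/9)^i · ∫_0^x f(t) dt. -/

import Mathlib

/-!
The substitution `t = (2 + s) / 3 ^ (k + 1)` maps `[0, x]` onto the interval of integration.
On `[0, 1]`, applying `f (y / 3) = (2/3) f y` to `y = (2 + s) / 3` `k` times and then
`f ((2 + s) / 3) = 1/3 + (2/3) f s` gives `f ((2 + s) / 3 ^ (k + 1)) = (2/3)^k (1/3 + (2/3) f s)`,
so the integral is an affine expression in `∫₀ˣ f`.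
-/

open intervalIntegral Set

lemma apply_div_pow_of_apply_div {f : ℝ → ℝ} {c r : ℝ} (hc : 1 ≤ c)
    (hf : ∀ y ∈ Icc (0:ℝ) 1, f (y / c) = r * f y) (k : ℕ) :
    ∀ y ∈ Icc (0:ℝ) 1, f (y / c ^ k) = r ^ k * f y := by
  induction k with
  | zero => simp
  | succ k ih =>
    intro y ⟨hy0, hy1⟩
    have hyc : y / c ∈ Icc (0:ℝ) 1 :=
      ⟨by positivity, (div_le_one (by linarith)).2 (hy1.trans hc)⟩
    rw [pow_succ', ← div_div, ih _ hyc, hf y ⟨hy0, hy1⟩, pow_succ]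
    ring

lemma apply_two_add_div_pow {f : ℝ → ℝ}
    (hw1 : ∀ x ∈ Icc (0:ℝ) 1, f (x / 3) = (2/3) * f x)
    (hw3 : ∀ x ∈ Icc (0:ℝ) 1, f ((2 + x) / 3) = 1/3 + (2/3) * f x)
    (k : ℕ) {s : ℝ} (hs : s ∈ Icc (0:ℝ) 1) :
    f ((2 + s) / 3 ^ (k + 1)) = (2/3) ^ k * (1/3 + (2/3) * f s) := by
  have hs' : (2 + s) / 3 ∈ Icc (0:ℝ) 1 := ⟨by linarith [hs.1], by linarith [hs.2]⟩
  rw [pow_succ', ← div_div, apply_div_pow_of_apply_div (by norm_num) hw1 k _ hs', hw3 s hs]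

theorem bourbaki_stmt_general (f : ℝ → ℝ)
    (hcont : ContinuousOn f (Set.Icc 0 1))
    (hw1 : ∀ x ∈ Set.Icc (0:ℝ) 1, f (x / 3) = (2/3) * f x)
    (hw3 : ∀ x ∈ Set.Icc (0:ℝ) 1, f ((2 + x) / 3) = 1/3 + (2/3) * f x) :
    ∀ x ∈ Set.Icc (0:ℝ) 1, ∀ i : ℕ, 0 < i → ∫ t in (2 / 3 ^ i)..((2 + x) / 3 ^ i), f t = (2 ^ (i - 1) / 9 ^ i) * x + (2/9) ^ i * ∫ t in (0:ℝ)..x, f t := by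
  intro x ⟨hx0, hx1⟩ i hi
  obtain ⟨k, rfl⟩ := Nat.exists_eq_add_one_of_ne_zero hi.ne'
  set c : ℝ := 3 ^ (k + 1)
  have hc : c ≠ 0 := by positivity
  have hsubst : ∫ t in (2 / c)..((2 + x) / c), f t =
      c⁻¹ * ∫ s in (0:ℝ)..x, f (s / c + 2 / c) := by
    rw [integral_comp_div_add f hc, smul_eq_mul, inv_mul_cancel_left₀ hc, zero_div, zero_add,
      add_div, add_comm]
  have hpointwise : ∫ s in (0:ℝ)..x, f (s / c + 2 / c) =
      ∫ s in (0:ℝ)..x, (2/3) ^ k * (1/3 + (2/3) * f s) := by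
    refine integral_congr fun s hs => ?_
    rw [uIcc_of_le hx0] at hs
    rw [← add_div, add_comm, apply_two_add_div_pow hw1 hw3 k ⟨hs.1, hs.2.trans hx1⟩]
  have hint : IntervalIntegrable f MeasureTheory.volume 0 x :=
    (hcont.mono (Icc_subset_Icc_right hx1)).intervalIntegrable_of_Icc hx0
  rw [hsubst, hpointwise, integral_const_mul, integral_add intervalIntegrable_const
    (hint.const_mul _), integral_const, integral_const_mul, smul_eq_mul, sub_zero,
    Nat.add_sub_cancel]
  simp only [c, div_pow, show (9:ℝ) = 3 ^ 2 by norm_num, ← pow_mul]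
  field_simp
  ring

theorem bourbaki_stmt (f : ℝ → ℝ)
    (hcont : ContinuousOn f (Set.Icc 0 1))
    (h0 : f 0 = 0) (h1 : f 1 = 1)
    (hw1 : ∀ x ∈ Set.Icc (0:ℝ) 1, f (x / 3) = (2/3) * f x)
    (hw2 : ∀ x ∈ Set.Icc (0:ℝ) 1, f ((2 - x) / 3) = (1/3) * (1 + f x))
    (hw3 : ∀ x ∈ Set.Icc (0:ℝ) 1, f ((2 + x) / 3) = 1/3 + (2/3) * f x) :
    ∀ x ∈ Set.Icc (0:ℝ) 1, ∀ i : ℕ, 0 < i → ∫ t in (2 / 3 ^ i)..((2 + x) / 3 ^ i), f t = (2 ^ (i - 1) / 9 ^ i) * x + (2/9) ^ i * ∫ t in (0:ℝ)..x, f t :=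
  bourbaki_stmt_general f hcont hw1 hw3
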